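/- Let f : ℝ/ℤ → S¹ be a piecewise-continuous map (continuous except at finitely many points t₁ < ... < t_N, at each of which the one-sided limits exist and are antipodal: lim_{t→tᵢ⁺} f(t) = −lim_{t→tᵢ⁻} f(t)), and suppose the induced map to ℝP¹ = S¹/{±1} is continuous and null-homotopic. Then N is even. -/

import Mathlib

/-- Quotient topology on the real projective line `ℝP¹ = P(ℝ, ℂ)`. -/
noncomputable instance projTopC : TopologicalSpace (Projectivization ℝ ℂ) :=
  instTopologicalSpaceQuotient

open Complex Filter Set

/-- The squaring map `ℝP¹ → S¹ ⊆ ℂ`, `[v] ↦ v² / ‖v‖²`. -/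
noncomputable def sqMap : Projectivization ℝ ℂ → ℂ :=
  Projectivization.lift (fun v => v.1 ^ 2 / ((‖v.1‖ : ℂ) ^ 2))
    (by
      rintro ⟨a, ha⟩ ⟨b, hb⟩ c (rfl : _ = c • (b:ℂ))
      have hc : (c : ℝ) ≠ 0 := by rintro rfl; simp at ha
      have hc2 : ((c : ℂ)) ^ 2 ≠ 0 := pow_ne_zero _ (by exact_mod_cast hc)
      simp only [Complex.real_smul]
      have h1 : ((c:ℂ) * b) ^ 2 = (c:ℂ)^2 * b^2 := by ring
      have h3 : ((‖(c:ℂ) * b‖ : ℝ) : ℂ)^2 = (c:ℂ)^2 * (‖b‖:ℂ)^2 := by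
        rw [norm_mul, Complex.norm_real, Real.norm_eq_abs]
        push_cast
        rw [mul_pow]
        norm_cast
        rw [_root_.sq_abs]
      rw [h1, h3, mul_div_mul_left _ _ hc2])

lemma sqMap_mk (v : ℂ) (hv : v ≠ 0) :
    sqMap (Projectivization.mk ℝ v hv) = v ^ 2 / ((‖v‖ : ℂ) ^ 2) := rfl

lemma norm_sqMap (q : Projectivization ℝ ℂ) : ‖sqMap q‖ = 1 := by
  induction q using Quotient.ind with
  | _ v =>
    obtain ⟨v, hv⟩ := v
    have : ‖v‖ ≠ 0 := norm_ne_zero_iff.2 hv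
    show ‖v ^ 2 / ((‖v‖ : ℂ) ^ 2)‖ = 1
    rw [norm_div, norm_pow, norm_pow, Complex.norm_real, norm_norm, div_self]
    positivity

lemma continuous_sqMap : Continuous sqMap := by
  apply Continuous.quotient_lift
  apply Continuous.div
  · exact (continuous_subtype_val.pow 2)
  · exact (Complex.continuous_ofReal.comp (continuous_subtype_val.norm)).pow 2
  · intro v
    have : ‖v.1‖ ≠ 0 := norm_ne_zero_iff.2 v.2
    simpa using this

/-- Stepwise logarithm lift along a homotopy. -/
noncomputable def thetaSeq (H : ℝ × ℝ → ℂ) (c : ℂ) (m : ℕ) : ℕ → ℝ → ℂ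
  | 0 => fun _ => c
  | (k+1) => fun s =>
      thetaSeq H c m k s + Complex.log (H (s, ((k:ℝ)+1)/m) / H (s, (k:ℝ)/m))

lemma thetaSeq_spec (H : ℝ × ℝ → ℂ) (c : ℂ) (m : ℕ) (hm : 0 < m)
    (hHcont : Continuous H) (hH1 : ∀ q, ‖H q‖ = 1)
    (hHper : ∀ s τ, H (s + 1, τ) = H (s, τ))
    (hc : ∀ s, Complex.exp c = H (s, 0))
    (hstep : ∀ s : ℝ, ∀ a b : ℝ, a ∈ Set.Icc (0:ℝ) 1 → b ∈ Set.Icc (0:ℝ) 1 →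
      |a - b| ≤ 1 / m → ‖H (s, a) - H (s, b)‖ < 1) :
    ∀ k, k ≤ m → Continuous (thetaSeq H c m k) ∧
      (∀ s, thetaSeq H c m k (s + 1) = thetaSeq H c m k s) ∧
      (∀ s, Complex.exp (thetaSeq H c m k s) = H (s, (k : ℝ) / m)) := by
  intro k
  induction k with
  | zero =>
    intro _
    refine ⟨continuous_const, fun s => rfl, fun s => ?_⟩
    simpa [thetaSeq] using hc s
  | succ k IH =>
    intro hk1
    obtain ⟨ihc, ihper, ihexp⟩ := IH (Nat.le_of_succ_le hk1)
    have hmR : (0:ℝ) < m := by exact_mod_cast hm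
    set a : ℝ := ((k:ℝ)+1)/m with ha_def
    set b : ℝ := (k:ℝ)/m with hb_def
    have haI : a ∈ Set.Icc (0:ℝ) 1 := by
      constructor
      · positivity
      · rw [div_le_one hmR]
        have : (k:ℝ) + 1 = ((k+1 : ℕ) : ℝ) := by push_cast; ring
        rw [this]
        exact_mod_cast hk1
    have hbI : b ∈ Set.Icc (0:ℝ) 1 := by
      constructor
      · positivity
      · rw [div_le_one hmR]
        have : (k:ℝ) ≤ (m:ℝ) := by exact_mod_cast Nat.le_of_succ_le hk1
        linarith
    have hab : |a - b| ≤ 1 / m := by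
      have : a - b = 1 / m := by
        rw [ha_def, hb_def, div_sub_div_same]
        norm_num
      rw [this, abs_of_pos (by positivity)]
    have hdist : ∀ s : ℝ, ‖H (s, a) - H (s, b)‖ < 1 := fun s => hstep s a b haI hbI hab
    have hb0 : ∀ s : ℝ, H (s, b) ≠ 0 := fun s => by
      intro h; have := hH1 (s, b); rw [h] at this; simp at this
    have ha0 : ∀ s : ℝ, H (s, a) ≠ 0 := fun s => by
      intro h; have := hH1 (s, a); rw [h] at this; simp at this
    set r : ℝ → ℂ := fun s => H (s, a) / H (s, b) with hr_def
    have hr0 : ∀ s, r s ≠ 0 := fun s => div_ne_zero (ha0 s) (hb0 s)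
    have hr1 : ∀ s, ‖r s - 1‖ < 1 := by
      intro s
      have : r s - 1 = (H (s, a) - H (s, b)) / H (s, b) := by
        rw [sub_div, div_self (hb0 s)]
      rw [this, norm_div, hH1 (s, b), div_one]
      exact hdist s
    have hre : ∀ s, 0 < (r s).re := by
      intro s
      have h1 : |(r s - 1).re| ≤ ‖r s - 1‖ := Complex.abs_re_le_norm _
      have h2 : (r s - 1).re = (r s).re - 1 := by rw [Complex.sub_re, Complex.one_re]
      have := hr1 s
      rw [h2] at h1
      cases abs_le.1 h1 with
      | intro hl hr => linarith
    have hrcont : Continuous r :=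
      (hHcont.comp (continuous_id.prodMk continuous_const)).div
        (hHcont.comp (continuous_id.prodMk continuous_const)) hb0
    have hlogcont : Continuous fun s => Complex.log (r s) := by
      rw [continuous_iff_continuousAt]
      intro s
      exact (continuousAt_clog (Or.inl (hre s))).comp hrcont.continuousAt
    refine ⟨ihc.add hlogcont, ?_, ?_⟩
    · intro s
      show thetaSeq H c m k (s+1) + Complex.log (H (s+1, a) / H (s+1, b)) = _
      rw [ihper s, hHper s a, hHper s b]
      rfl
    · intro s
      show Complex.exp (thetaSeq H c m k s + Complex.log (r s)) = H (s, ((k+1 : ℕ) : ℝ) / m)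
      rw [Complex.exp_add, ihexp s, Complex.exp_log (hr0 s)]
      have : ((k+1 : ℕ) : ℝ) / m = a := by push_cast; rw [ha_def]
      rw [this, hr_def]
      rw [mul_comm, div_mul_cancel₀ _ (hb0 s)]

lemma exists_periodic_log (g : C(AddCircle (1:ℝ), Projectivization ℝ ℂ))
    (hnull : g.Nullhomotopic) :
    ∃ Θ : ℝ → ℂ, Continuous Θ ∧ (∀ s, Θ (s+1) = Θ s) ∧
      ∀ s : ℝ, Complex.exp (Θ s) = sqMap (g (s : AddCircle (1:ℝ))) := by
  obtain ⟨p, ⟨G⟩⟩ := hnull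
  let K := G.symm
  have hcoe : Continuous fun s : ℝ => (s : AddCircle (1:ℝ)) := continuous_quotient_mk'
  set H : ℝ × ℝ → ℂ := fun q =>
    sqMap (K (Set.projIcc (0:ℝ) 1 zero_le_one q.2, (q.1 : AddCircle (1:ℝ)))) with hH_def
  have hHcont : Continuous H := by
    apply continuous_sqMap.comp
    apply K.continuous.comp
    exact ((continuous_projIcc.comp continuous_snd).prodMk (hcoe.comp continuous_fst))
  have hH1 : ∀ q, ‖H q‖ = 1 := fun q => norm_sqMap _
  have hHper : ∀ s τ, H (s + 1, τ) = H (s, τ) := by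
    intro s τ
    have : ((s + 1 : ℝ) : AddCircle (1:ℝ)) = (s : AddCircle (1:ℝ)) :=
      AddCircle.coe_add_period 1 s
    simp only [hH_def, this]
  have hH0 : ∀ s : ℝ, H (s, 0) = sqMap p := by
    intro s
    simp only [hH_def, Set.projIcc_left]
    congr 1
    exact K.apply_zero _
  have hH1' : ∀ s : ℝ, H (s, 1) = sqMap (g (s : AddCircle (1:ℝ))) := by
    intro s
    simp only [hH_def, Set.projIcc_right]
    congr 1
    exact K.apply_one _
  have hp0 : sqMap p ≠ 0 := by
    intro h
    have := norm_sqMap p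
    rw [h] at this; simp at this
  have hc : ∀ s : ℝ, Complex.exp (Complex.log (sqMap p)) = H (s, 0) := by
    intro s
    rw [Complex.exp_log hp0, hH0]
  -- uniform continuity on a compact square
  have hK2 : IsCompact ((Set.Icc (0:ℝ) 1) ×ˢ (Set.Icc (0:ℝ) 1)) :=
    isCompact_Icc.prod isCompact_Icc
  have huc := hK2.uniformContinuousOn_of_continuous hHcont.continuousOn
  rw [Metric.uniformContinuousOn_iff] at huc
  obtain ⟨δ, hδ, hucδ⟩ := huc 1 one_pos
  -- reduce arbitrary s to the fundamental domain
  have hfrac : ∀ s : ℝ, ∀ τ : ℝ, H (s, τ) = H (Int.fract s, τ) := by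
    intro s τ
    have : ((s : ℝ) : AddCircle (1:ℝ)) = ((Int.fract s : ℝ) : AddCircle (1:ℝ)) := by
      rw [QuotientAddGroup.eq, AddSubgroup.mem_zmultiples_iff]
      refine ⟨-⌊s⌋, ?_⟩
      rw [zsmul_eq_mul, Int.fract]
      push_cast
      ring
    simp only [hH_def, this]
  obtain ⟨n, hn⟩ := exists_nat_one_div_lt hδ
  set m : ℕ := n + 1 with hm_def
  have hm : 0 < m := Nat.succ_pos n
  have hstep : ∀ s : ℝ, ∀ a b : ℝ, a ∈ Set.Icc (0:ℝ) 1 → b ∈ Set.Icc (0:ℝ) 1 →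
      |a - b| ≤ 1 / m → ‖H (s, a) - H (s, b)‖ < 1 := by
    intro s a b haI hbI hab
    have hfs : Int.fract s ∈ Set.Icc (0:ℝ) 1 :=
      ⟨Int.fract_nonneg s, (Int.fract_lt_one s).le⟩
    have hma : (Int.fract s, a) ∈ (Set.Icc (0:ℝ) 1) ×ˢ (Set.Icc (0:ℝ) 1) := ⟨hfs, haI⟩
    have hmb : (Int.fract s, b) ∈ (Set.Icc (0:ℝ) 1) ×ˢ (Set.Icc (0:ℝ) 1) := ⟨hfs, hbI⟩
    have hd : dist ((Int.fract s, a) : ℝ × ℝ) (Int.fract s, b) < δ := by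
      rw [Prod.dist_eq]
      simp only [dist_self]
      rw [max_def]
      have h1 : dist a b < δ := by
        rw [Real.dist_eq]
        calc |a - b| ≤ 1 / m := hab
          _ < δ := by
            rw [hm_def]
            push_cast
            exact hn
      split <;> [exact h1; exact hδ]
    have := hucδ _ hma _ hmb hd
    rw [hfrac s a, hfrac s b]
    rwa [dist_eq_norm] at this
  obtain ⟨hΘc, hΘper, hΘexp⟩ :=
    thetaSeq_spec H (Complex.log (sqMap p)) m hm hHcont hH1 hHper hc hstep m le_rfl
  refine ⟨thetaSeq H (Complex.log (sqMap p)) m m, hΘc, hΘper, fun s => ?_⟩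
  rw [hΘexp s]
  rw [div_self (by exact_mod_cast hm.ne' : (m:ℝ) ≠ 0)]
  exact hH1' s

/-- Parity lemma: let `f : ℝ/ℤ → S¹` (a `1`-periodic unit-vector field) be
continuous except at finitely many points `t₁ < ... < t_N` in `[0,1)` (and
their integer translates), at each of which the one-sided limits exist and
are antipodal.  If the induced map to `ℝP¹ = S¹/±1` is continuous and
null-homotopic, then `N` is even. -/
theorem even_number_of_antipodal_flips
    (N : ℕ) (t : Fin N → ℝ) (ht : StrictMono t)
    (htmem : ∀ i, t i ∈ Set.Ico (0 : ℝ) 1)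
    (f : ℝ → ℂ) (hnorm : ∀ s, ‖f s‖ = 1) (hper : Function.Periodic f 1)
    (hcont : ContinuousOn f {s : ℝ | ∃ i : Fin N, ∃ k : ℤ, s = t i + k}ᶜ)
    (L : Fin N → ℂ)
    (hflip : ∀ i : Fin N,
      Filter.Tendsto f (nhdsWithin (t i) (Set.Iio (t i))) (nhds (L i)) ∧
      Filter.Tendsto f (nhdsWithin (t i) (Set.Ioi (t i))) (nhds (-(L i))))
    (g : C(AddCircle (1 : ℝ), Projectivization ℝ ℂ))
    (hlift : ∀ s : ℝ, ∃ h : f s ≠ 0,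
      g (s : AddCircle (1 : ℝ)) = Projectivization.mk ℝ (f s) h)
    (hnull : g.Nullhomotopic) :
    Even N := by
  classical
  rcases Nat.eq_zero_or_pos N with hN0 | hN
  · simp [hN0]
  by_contra hodd
  have hNodd : Odd N := Nat.odd_iff.2 (Nat.not_even_iff.1 hodd)
  -- the lift of the squared map
  obtain ⟨Θ, hΘc, hΘper, hΘexp⟩ := exists_periodic_log g hnull
  have hsq : ∀ s : ℝ, sqMap (g (s : AddCircle (1:ℝ))) = (f s)^2 := by
    intro s
    obtain ⟨hfs, hgs⟩ := hlift s
    rw [hgs, sqMap_mk, hnorm s]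
    simp
  set E : ℝ → ℂ := fun s => Complex.exp (Θ s / 2) with hE_def
  have hEc : Continuous E := Complex.continuous_exp.comp (hΘc.div_const 2)
  have hEper : ∀ s, E (s+1) = E s := fun s => by simp only [hE_def, hΘper s]
  have hEsq : ∀ s, (E s)^2 = (f s)^2 := by
    intro s
    have h1 : (Complex.exp (Θ s / 2))^2 = Complex.exp (Θ s / 2 + Θ s / 2) := by
      rw [Complex.exp_add]; ring
    rw [hE_def]
    simp only
    rw [h1, (by ring : Θ s/2 + Θ s/2 = Θ s), hΘexp s, hsq s]
  have hE1 : ∀ s, ‖E s‖ = 1 := by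
    intro s
    have h2 : ‖E s‖^2 = 1 := by
      rw [← norm_pow, hEsq s, norm_pow, hnorm s, one_pow]
    nlinarith [norm_nonneg (E s)]
  -- the sign function
  set σ : ℝ → ℝ := fun s => (f s * (starRingEnd ℂ) (E s)).re with hσ_def
  have key : ∀ s, (f s * (starRingEnd ℂ) (E s) = 1 ∧ σ s = 1) ∨
      (f s * (starRingEnd ℂ) (E s) = -1 ∧ σ s = -1) := by
    intro s
    have h2 : (f s * (starRingEnd ℂ) (E s))^2 = 1 := by
      have ha : (f s * (starRingEnd ℂ) (E s))^2
          = (f s)^2 * (starRingEnd ℂ) ((E s)^2) := by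
        rw [mul_pow, map_pow]
      rw [ha, hEsq s, Complex.mul_conj]
      have : Complex.normSq ((f s)^2) = 1 := by
        have : ‖(f s)^2‖ = 1 := by
          rw [norm_pow, hnorm s, one_pow]
        rw [Complex.normSq_eq_norm_sq, this, one_pow]
      rw [this]; norm_num
    have h3 : (f s * (starRingEnd ℂ) (E s) - 1) * (f s * (starRingEnd ℂ) (E s) + 1) = 0 := by
      linear_combination h2
    rcases mul_eq_zero.1 h3 with h | h
    · left
      have h4 : f s * (starRingEnd ℂ) (E s) = 1 := by linear_combination h
      exact ⟨h4, by rw [hσ_def]; simp only; rw [h4]; simp⟩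
    · right
      have h4 : f s * (starRingEnd ℂ) (E s) = -1 := by linear_combination h
      exact ⟨h4, by rw [hσ_def]; simp only; rw [h4]; simp⟩
  have hσval : ∀ s, σ s = 1 ∨ σ s = -1 := fun s => (key s).imp And.right And.right
  have hσne : ∀ s, σ s ≠ 0 := by
    intro s
    rcases hσval s with h | h <;> rw [h] <;> norm_num
  set C : Set ℝ := {s : ℝ | ∃ i : Fin N, ∃ k : ℤ, s = t i + k}ᶜ with hC_def
  have hσcont : ContinuousOn σ C := by
    apply Complex.continuous_re.comp_continuousOn
    exact hcont.mul ((Complex.continuous_conj.comp hEc)).continuousOn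
  have hσper : ∀ s, σ (s+1) = σ s := by
    intro s
    simp only [hσ_def, hper s, hEper s]
  -- one-sided limits of σ at the flip points
  set c : Fin N → ℝ := fun i => (L i * (starRingEnd ℂ) (E (t i))).re with hc_def
  have hconjE : ∀ i : Fin N, Filter.Tendsto (fun s => (starRingEnd ℂ) (E s))
      (nhdsWithin (t i) (Set.Iio (t i))) (nhds ((starRingEnd ℂ) (E (t i)))) :=
    fun i => ((Complex.continuous_conj.comp hEc).tendsto _).mono_left nhdsWithin_le_nhds
  have hconjE' : ∀ i : Fin N, Filter.Tendsto (fun s => (starRingEnd ℂ) (E s))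
      (nhdsWithin (t i) (Set.Ioi (t i))) (nhds ((starRingEnd ℂ) (E (t i)))) :=
    fun i => ((Complex.continuous_conj.comp hEc).tendsto _).mono_left nhdsWithin_le_nhds
  have hleft : ∀ i : Fin N, Filter.Tendsto σ (nhdsWithin (t i) (Set.Iio (t i))) (nhds (c i)) :=
    fun i => (Complex.continuous_re.tendsto _).comp ((hflip i).1.mul (hconjE i))
  have hright : ∀ i : Fin N, Filter.Tendsto σ (nhdsWithin (t i) (Set.Ioi (t i)))
      (nhds (-(c i))) := by
    intro i
    have := (Complex.continuous_re.tendsto _).comp ((hflip i).2.mul (hconjE' i))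
    have he : (-(L i) * (starRingEnd ℂ) (E (t i))).re = -(c i) := by
      rw [neg_mul, Complex.neg_re, hc_def]
    rwa [he] at this
  -- σ is constant on flip-free open intervals
  have hconst : ∀ a b : ℝ, Set.Ioo a b ⊆ C →
      ∀ x ∈ Set.Ioo a b, ∀ y ∈ Set.Ioo a b, σ x = σ y := by
    have main : ∀ x y : ℝ, x < y → Set.Icc x y ⊆ C → σ x = σ y := by
      intro x y hxy hsub
      by_contra hne
      have hcs : ContinuousOn σ (Set.uIcc x y) := by
        rw [Set.uIcc_of_le hxy.le]
        exact hσcont.mono hsub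
      have h0 : (0:ℝ) ∈ Set.uIcc (σ x) (σ y) := by
        rcases hσval x with h | h <;> rcases hσval y with h' | h' <;>
          first
            | (exact absurd (h.trans h'.symm) hne)
            | (rw [h, h', Set.mem_uIcc]; norm_num)
      obtain ⟨z, hz, hz0⟩ := intermediate_value_uIcc hcs h0
      exact hσne z hz0
    intro a b hsub x hx y hy
    rcases lt_trichotomy x y with h | h | h
    · exact main x y h (fun z hz => hsub ⟨lt_of_lt_of_le hx.1 hz.1, lt_of_le_of_lt hz.2 hy.2⟩)
    · rw [h]
    · exact (main y x h (fun z hz => hsub ⟨lt_of_lt_of_le hy.1 hz.1,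
        lt_of_le_of_lt hz.2 hx.2⟩)).symm
  -- the subdivision points
  set i0 : Fin N := ⟨0, hN⟩ with hi0_def
  set d : ℕ → ℝ := fun k => if h : k < N then t ⟨k, h⟩ else t i0 + 1 with hd_def
  have hd_eq_lt : ∀ k (h : k < N), d k = t ⟨k, h⟩ := fun k h => by simp [hd_def, h]
  have hd_eq_ge : ∀ k, N ≤ k → d k = t i0 + 1 := fun k h => by
    simp [hd_def, Nat.not_lt.2 h]
  have hd_ge : ∀ k, t i0 ≤ d k := by
    intro k
    by_cases h : k < N
    · rw [hd_eq_lt k h]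
      exact ht.monotone (by exact Fin.mk_le_mk.2 (Nat.zero_le _))
    · rw [hd_eq_ge k (Nat.not_lt.1 h)]
      linarith [(htmem i0).1]
  have hd_le : ∀ k, d k ≤ t i0 + 1 := by
    intro k
    by_cases h : k < N
    · rw [hd_eq_lt k h]
      linarith [(htmem ⟨k, h⟩).2, (htmem i0).1]
    · rw [hd_eq_ge k (Nat.not_lt.1 h)]
  have hd_lt : ∀ k, k < N → d k < d (k+1) := by
    intro k hk
    rw [hd_eq_lt k hk]
    by_cases h : k + 1 < N
    · rw [hd_eq_lt (k+1) h]
      exact ht (by exact Fin.mk_lt_mk.2 (Nat.lt_succ_self k))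
    · rw [hd_eq_ge (k+1) (Nat.not_lt.1 h)]
      linarith [(htmem ⟨k, hk⟩).2, (htmem i0).1]
  -- the open intervals between consecutive subdivision points are flip-free
  have hfree : ∀ k, k < N → Set.Ioo (d k) (d (k+1)) ⊆ C := by
    intro k hk s hs
    simp only [hC_def, Set.mem_compl_iff, Set.mem_setOf_eq]
    rintro ⟨i, m, rfl⟩
    have hs1 : t i0 ≤ t i + m := le_trans (hd_ge k) hs.1.le
    have hs2 : t i + m < t i0 + 1 := lt_of_lt_of_le hs.2 (hd_le (k+1))
    have hti := htmem i
    have hti0 := htmem i0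
    have hm0 : (0:ℤ) ≤ m := by
      have h' : (-1:ℝ) < (m:ℝ) := by linarith [hti.2, hti0.1]
      have h'' : (-1:ℤ) < m := by exact_mod_cast h'
      omega
    have hm1 : m ≤ 1 := by
      have h' : (m:ℝ) < 2 := by linarith [hti.1, hti0.2]
      have h'' : m < 2 := by exact_mod_cast h'
      omega
    interval_cases m
    · -- m = 0
      simp only [Int.cast_zero, add_zero] at hs hs1 hs2
      by_cases h : k + 1 < N
      · rw [hd_eq_lt k hk, hd_eq_lt (k+1) h] at hs
        have h1 : k < i.val := by
          have := ht.lt_iff_lt.1 hs.1; simpa [Fin.lt_def] using this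
        have h2 : i.val < k + 1 := by
          have := ht.lt_iff_lt.1 hs.2; simpa [Fin.lt_def] using this
        omega
      · rw [hd_eq_lt k hk] at hs
        have h1 : k < i.val := by
          have := ht.lt_iff_lt.1 hs.1; simpa [Fin.lt_def] using this
        have := i.isLt
        omega
    · -- m = 1
      have h3 : t i < t i0 := by push_cast at hs2; linarith
      have h4 : i0 ≤ i := by exact Fin.mk_le_mk.2 (Nat.zero_le _)
      exact absurd h3 (not_lt.2 (ht.monotone h4))
  -- the value of σ on each interval
  set ε : ℕ → ℝ := fun k => σ ((d k + d (k+1))/2) with hε_def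
  have hmid : ∀ k, k < N → (d k + d (k+1))/2 ∈ Set.Ioo (d k) (d (k+1)) := by
    intro k hk
    constructor <;> nlinarith [hd_lt k hk]
  have hεIoo : ∀ k, k < N → ∀ x ∈ Set.Ioo (d k) (d (k+1)), σ x = ε k := by
    intro k hk x hx
    exact hconst (d k) (d (k+1)) (hfree k hk) x hx _ (hmid k hk)
  -- σ tends to ε k from the right at d k
  have htendr : ∀ k, k < N → Filter.Tendsto σ (nhdsWithin (d k) (Set.Ioi (d k)))
      (nhds (ε k)) := by
    intro k hk
    have hmem : Set.Ioo (d k) (d (k+1)) ∈ nhdsWithin (d k) (Set.Ioi (d k)) :=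
      Ioo_mem_nhdsGT_of_mem ⟨le_refl _, hd_lt k hk⟩
    refine Filter.Tendsto.congr' ?_ tendsto_const_nhds
    filter_upwards [hmem] with x hx
    exact (hεIoo k hk x hx).symm
  -- σ tends to ε k from the left at d (k+1)
  have htendl : ∀ k, k < N → Filter.Tendsto σ (nhdsWithin (d (k+1)) (Set.Iio (d (k+1))))
      (nhds (ε k)) := by
    intro k hk
    have hmem : Set.Ioo (d k) (d (k+1)) ∈ nhdsWithin (d (k+1)) (Set.Iio (d (k+1))) :=
      Ioo_mem_nhdsLT_of_mem ⟨hd_lt k hk, le_refl _⟩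
    refine Filter.Tendsto.congr' ?_ tendsto_const_nhds
    filter_upwards [hmem] with x hx
    exact (hεIoo k hk x hx).symm
  -- identification of the limits
  have hεr : ∀ k (hk : k < N), ε k = -(c ⟨k, hk⟩) := by
    intro k hk
    have h1 := htendr k hk
    rw [hd_eq_lt k hk] at h1
    exact tendsto_nhds_unique h1 (hright ⟨k, hk⟩)
  have hεl : ∀ k (hk1 : k + 1 < N), ε k = c ⟨k+1, hk1⟩ := by
    intro k hk1
    have h1 := htendl k (Nat.lt_of_succ_lt hk1)
    rw [hd_eq_lt (k+1) hk1] at h1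
    exact tendsto_nhds_unique h1 (hleft ⟨k+1, hk1⟩)
  -- the left limit at t i0 + 1, via periodicity
  have hεlast : ε (N - 1) = c i0 := by
    have hNN : N - 1 + 1 = N := Nat.succ_pred_eq_of_pos hN
    have h1 := htendl (N-1) (by omega)
    rw [hNN, hd_eq_ge N le_rfl] at h1
    -- transport the left limit by the translation s ↦ s - 1
    have htrans : Filter.Tendsto (fun s => s - 1)
        (nhdsWithin (t i0 + 1) (Set.Iio (t i0 + 1))) (nhdsWithin (t i0) (Set.Iio (t i0))) := by
      apply tendsto_nhdsWithin_of_tendsto_nhds_of_eventually_within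
      · have h2 : Filter.Tendsto (fun s : ℝ => s - 1) (nhds (t i0 + 1))
            (nhds (t i0 + 1 - 1)) := (continuous_id.sub continuous_const).tendsto _
        rw [show t i0 + 1 - 1 = t i0 by ring] at h2
        exact h2.mono_left nhdsWithin_le_nhds
      · refine eventually_nhdsWithin_of_forall (fun x hx => ?_)
        simp only [Set.mem_Iio] at hx ⊢
        linarith
    have h3 : Filter.Tendsto σ (nhdsWithin (t i0 + 1) (Set.Iio (t i0 + 1))) (nhds (c i0)) := by
      have h4 := (hleft i0).comp htrans
      have h5 : (σ ∘ fun s => s - 1) = σ := by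
        funext s
        have := hσper (s - 1)
        simp only [sub_add_cancel] at this
        simpa using this.symm
      rwa [h5] at h4
    exact tendsto_nhds_unique h1 h3
  -- the sign alternation
  have halt : ∀ k, k + 1 < N → ε (k+1) = -ε k := by
    intro k hk1
    rw [hεr (k+1) hk1, ← hεl k hk1]
  have hpow : ∀ k, k < N → ε k = (-1)^k * ε 0 := by
    intro k
    induction k with
    | zero => intro _; simp
    | succ k IH =>
      intro hk1
      rw [halt k hk1, IH (Nat.lt_of_succ_lt hk1), pow_succ]
      ring
  -- conclusion
  have hfirst : ε 0 = -(c i0) := hεr 0 hN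
  have hlast2 : ε (N-1) = (-1)^(N-1) * ε 0 := hpow (N-1) (by omega)
  have hevensub : Even (N - 1) := Nat.Odd.sub_odd hNodd odd_one
  have hpow1 : ((-1:ℝ))^(N-1) = 1 := hevensub.neg_one_pow
  rw [hpow1, one_mul] at hlast2
  have hε0ne : ε 0 ≠ 0 := hσne _
  have hcc : c i0 = -(c i0) := by linarith [hεlast, hlast2, hfirst]
  have hc0 : c i0 = 0 := by linarith
  exact hε0ne (by rw [hfirst, hc0, neg_zero])
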